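/- Let V be a symplectic vector space over ℂ of dimension 2n, and let A ∈ sp(V) satisfy ⟨A(W), W⟩ = 0 for a 2m-dimensional symplectic subspace W of V (with V = W ⊕ W' orthogonal). Then rank(A) ≤ 2·(2n − 2m) = 4n − 4m. -/
import Mathlib


/-- Let `V` be a `2n`-dimensional complex symplectic vector space with symplectic form
`Ω`, and let `A ∈ sp(V)`.  If `W ⊆ V` is a `2m`-dimensional subspace on which `Ω` is
nondegenerate and `Ω(A w₁, w₂) = 0` for all `w₁, w₂ ∈ W`, then `rank A ≤ 4n - 4m`. -/
theorem rank_le_of_isotropic_image {V : Type*} [AddCommGroup V] [Module ℂ V]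
    [FiniteDimensional ℂ V] (n m : ℕ) (hdim : Module.finrank ℂ V = 2 * n)
    (Ω : V →ₗ[ℂ] V →ₗ[ℂ] ℂ) (halt : ∀ v : V, Ω v v = 0)
    (hnd : ∀ v : V, (∀ w : V, Ω v w = 0) → v = 0)
    (A : V →ₗ[ℂ] V) (hA : ∀ v w : V, Ω (A v) w + Ω v (A w) = 0)
    (W : Submodule ℂ V) (hW : Module.finrank ℂ W = 2 * m)
    (hWnd : ∀ w ∈ W, (∀ w' ∈ W, Ω w w' = 0) → w = 0)
    (hAW : ∀ w₁ ∈ W, ∀ w₂ ∈ W, Ω (A w₁) w₂ = 0) :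
    Module.finrank ℂ (LinearMap.range A) ≤ 4 * n - 4 * m := by
  classical
  -- the map sending v to the functional Ω v restricted to W
  set φ : V →ₗ[ℂ] (W →ₗ[ℂ] ℂ) := Ω.compl₂ W.subtype with hφ
  set P : Submodule ℂ V := LinearMap.ker φ with hP
  have memP : ∀ v : V, v ∈ P ↔ ∀ w ∈ W, Ω v w = 0 := by
    intro v
    constructor
    · intro hv w hw
      have := congrArg (fun f => f ⟨w, hw⟩) (show φ v = 0 from hv)
      simpa [hφ, LinearMap.compl₂_apply] using this
    · intro h
      ext w
      simpa [hφ, LinearMap.compl₂_apply] using h w w.2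
  have hmn : 2 * m ≤ 2 * n := by
    rw [← hW, ← hdim]; exact W.finrank_le
  -- dim P ≥ 2n - 2m
  have hrankφ : Module.finrank ℂ (LinearMap.range φ) ≤ 2 * m := by
    have h1 : Module.finrank ℂ (LinearMap.range φ) ≤
        Module.finrank ℂ (W →ₗ[ℂ] ℂ) := Submodule.finrank_le _
    have h2 : Module.finrank ℂ (W →ₗ[ℂ] ℂ) = 2 * m := by
      rw [← hW]; exact Subspace.dual_finrank_eq
    omega
  have hPge : 2 * n - 2 * m ≤ Module.finrank ℂ P := by
    have := LinearMap.finrank_range_add_finrank_ker φ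
    rw [hdim, ← hP] at this
    omega
  -- W ∩ P = ⊥
  have hdisj : W ⊓ P = ⊥ := by
    rw [Submodule.eq_bot_iff]
    rintro x ⟨hxW, hxP⟩
    exact hWnd x hxW (fun w' hw' => (memP x).1 hxP w' hw')
  have hsum := Submodule.finrank_sup_add_finrank_inf_eq W P
  rw [hdisj, finrank_bot, hW] at hsum
  have hsup_le : Module.finrank ℂ ↥(W ⊔ P) ≤ 2 * n := by
    rw [← hdim]; exact Submodule.finrank_le _
  have hPle : Module.finrank ℂ P ≤ 2 * n - 2 * m := by omega
  have hPeq : Module.finrank ℂ P = 2 * n - 2 * m := le_antisymm hPle hPge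
  -- W ⊔ P = ⊤
  have htop : W ⊔ P = ⊤ := by
    apply Submodule.eq_top_of_finrank_eq
    rw [hdim]
    omega
  -- range A = A(W) ⊔ A(P)
  have hrange : LinearMap.range A = Submodule.map A W ⊔ Submodule.map A P := by
    rw [← Submodule.map_sup, htop, Submodule.map_top]
  -- A(W) ≤ P
  have hAWP : Submodule.map A W ≤ P := by
    rintro x ⟨w, hw, rfl⟩
    exact (memP (A w)).2 (fun w' hw' => hAW w hw w' hw')
  have h1 : Module.finrank ℂ (Submodule.map A W) ≤ 2 * n - 2 * m := by
    rw [← hPeq]; exact Submodule.finrank_mono hAWP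
  have h2 : Module.finrank ℂ (Submodule.map A P) ≤ 2 * n - 2 * m := by
    rw [← hPeq]; exact Submodule.finrank_map_le A P
  have h3 := Submodule.finrank_sup_add_finrank_inf_eq (Submodule.map A W) (Submodule.map A P)
  have h4 : Module.finrank ℂ (LinearMap.range A) =
      Module.finrank ℂ ↥(Submodule.map A W ⊔ Submodule.map A P) := by rw [hrange]
  omega
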